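/- Let G₁ and G₂ be groups, A an abelian group regarded as a trivial module, and n ≥ 1 a natural number. For i = 1, 2, let res_i : H^n(G₁ × G₂; A) → H^n(G_i; A) be the map induced by the canonical inclusion G_i → G₁ × G₂, and let infl_i : H^n(G_i; A) → H^n(G₁ × G₂; A) be the map induced by the canonical projection G₁ × G₂ → G_i. Then res_i ∘ infl_i = id for i = 1, 2, res_i ∘ infl_j = 0 for i ≠ j, each infl_i is injective, and H^n(G₁ × G₂; A) is the internal direct sum of the three subgroups range(infl₁), range(infl₂), and ker(res₁) ∩ ker(res₂). -/

import Mathlib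

open CategoryTheory groupCohomology

noncomputable section

namespace SPT

variable {G G' : Type} [Group G] [Group G']

theorem comp_contractNth (f : G' →* G) {n : ℕ} (j : Fin (n + 1)) (g : Fin (n + 1) → G') :
    (⇑f) ∘ Fin.contractNth j (· * ·) g = Fin.contractNth j (· * ·) ((⇑f) ∘ g) := by
  ext k
  rcases lt_trichotomy (k : ℕ) (j : ℕ) with h | h | h
  · simp only [Function.comp_apply, Fin.contractNth_apply_of_lt _ _ _ _ h]
  · simp only [Function.comp_apply, Fin.contractNth_apply_of_eq _ _ _ _ h, map_mul]
  · simp only [Function.comp_apply, Fin.contractNth_apply_of_gt _ _ _ _ h]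

/-- The map on inhomogeneous cochains (with trivial coefficients `A`) induced by
precomposition with a group homomorphism `f : G' →* G`. -/
def cochainsMap (f : G' →* G) (A : Type) [AddCommGroup A] :
    inhomogeneousCochains (Rep.trivial ℤ G A) ⟶ inhomogeneousCochains (Rep.trivial ℤ G' A) where
  f n := ModuleCat.ofHom
    { toFun := fun (c : (Fin n → G) → A) (x : Fin n → G') => c ((⇑f) ∘ x)
      map_add' := fun _ _ => rfl
      map_smul' := fun _ _ => rfl }
  comm' i j hij := by
    obtain rfl : i + 1 = j := hij
    ext c x
    simp only [CochainComplex.of_d, ModuleCat.hom_comp, LinearMap.comp_apply,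
      ModuleCat.hom_ofHom, LinearMap.coe_mk, AddHom.coe_mk]
    show (inhomogeneousCochains.d (Rep.trivial ℤ G' A) i).hom (fun y => c ((⇑f) ∘ y)) x
        = (inhomogeneousCochains.d (Rep.trivial ℤ G A) i).hom c ((⇑f) ∘ x)
    simp only [inhomogeneousCochains.d_hom_apply, Rep.trivial_ρ_apply]
    congr 1
    exact Finset.sum_congr rfl fun j _ => by rw [comp_contractNth]

/-- The homomorphism `f^* : Hⁿ(G; A) →+ Hⁿ(G'; A)` on group cohomology (with trivial
coefficients `A`) induced by a group homomorphism `f : G' →* G`; it is induced by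
precomposition with `f` on inhomogeneous cochains. -/
def cohomologyMap (f : G' →* G) (A : Type) [AddCommGroup A] (n : ℕ) :
    groupCohomology (Rep.trivial ℤ G A) n →+ groupCohomology (Rep.trivial ℤ G' A) n :=
  AddMonoidHom.mk' (HomologicalComplex.homologyMap (cochainsMap f A) n) (map_add _)

end SPT

open SPT

section Product

variable (G₁ G₂ : Type) [Group G₁] [Group G₂] (A : Type) [AddCommGroup A] (n : ℕ)

/-- The restriction `res₁ : H^n(G₁ × G₂; A) → H^n(G₁; A)`, induced by the canonical
inclusion `G₁ → G₁ × G₂`. -/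
noncomputable def res₁ := cohomologyMap (MonoidHom.inl G₁ G₂) A n

/-- The restriction `res₂ : H^n(G₁ × G₂; A) → H^n(G₂; A)`, induced by the canonical
inclusion `G₂ → G₁ × G₂`. -/
noncomputable def res₂ := cohomologyMap (MonoidHom.inr G₁ G₂) A n

/-- The inflation `infl₁ : H^n(G₁; A) → H^n(G₁ × G₂; A)`, induced by the canonical
projection `G₁ × G₂ → G₁`. -/
noncomputable def infl₁ := cohomologyMap (MonoidHom.fst G₁ G₂) A n

/-- The inflation `infl₂ : H^n(G₂; A) → H^n(G₁ × G₂; A)`, induced by the canonical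
projection `G₁ × G₂ → G₂`. -/
noncomputable def infl₂ := cohomologyMap (MonoidHom.snd G₁ G₂) A n

end Product

/-!
Precomposition with homomorphisms makes `Hⁿ(-; A)` a contravariant functor, and `Hⁿ` of the
trivial group vanishes for `n ≥ 1`. As `fst ∘ inl = id`, `snd ∘ inr = id` and the mixed
composites `snd ∘ inl`, `fst ∘ inr` factor through the trivial group, `resᵢ ∘ inflⱼ` is the
identity for `i = j` and zero otherwise. Applying `res₁` and `res₂` then shows that every class
splits uniquely as `infl₁ (res₁ x) + infl₂ (res₂ x) + (x - infl₁ (res₁ x) - infl₂ (res₂ x))`.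
-/

section Splitting

variable {M N₁ N₂ : Type*} [AddCommGroup M] [AddCommGroup N₁] [AddCommGroup N₂]
  {i₁ : N₁ →+ M} {i₂ : N₂ →+ M} {r₁ : M →+ N₁} {r₂ : M →+ N₂}

theorem DirectSum.isInternal_range_range_ker_inf_ker (h₁₁ : Function.LeftInverse r₁ i₁)
    (h₂₂ : Function.LeftInverse r₂ i₂) (h₁₂ : ∀ y, r₁ (i₂ y) = 0) (h₂₁ : ∀ y, r₂ (i₁ y) = 0) :
    DirectSum.IsInternal ![i₁.range, i₂.range, r₁.ker ⊓ r₂.ker] := by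
  refine ⟨(injective_iff_map_eq_zero _).2 fun z hz => ?_, fun x => ?_⟩
  · obtain ⟨a, ha⟩ : (z 0 : M) ∈ i₁.range := (z 0).2
    obtain ⟨b, hb⟩ : (z 1 : M) ∈ i₂.range := (z 1).2
    obtain ⟨hc₁, hc₂⟩ : r₁ (z 2) = 0 ∧ r₂ (z 2) = 0 := (z 2).2
    have hsum : (z 0 : M) + z 1 + z 2 = 0 := by
      rwa [← DirectSum.sum_univ_of z, map_sum, Fin.sum_univ_three,
        DirectSum.coeAddMonoidHom_of, DirectSum.coeAddMonoidHom_of,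
        DirectSum.coeAddMonoidHom_of] at hz
    have ha₀ : a = 0 := by
      simpa [← ha, ← hb, h₁₁ a, h₁₂, hc₁] using congrArg r₁ hsum
    have hb₀ : b = 0 := by
      simpa [← ha, ← hb, h₂₂ b, h₂₁, hc₂] using congrArg r₂ hsum
    have hc₀ : (z 2 : M) = 0 := by simpa [← ha, ← hb, ha₀, hb₀] using hsum
    ext i
    fin_cases i
    · simp [← ha, ha₀]
    · simp [← hb, hb₀]
    · simpa using hc₀
  · have hc : x - i₁ (r₁ x) - i₂ (r₂ x) ∈ r₁.ker ⊓ r₂.ker :=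
      ⟨by simp [h₁₁ _, h₁₂], by simp [h₂₂ _, h₂₁]⟩
    refine ⟨.of _ 0 ⟨_, r₁ x, rfl⟩ + .of _ 1 ⟨_, r₂ x, rfl⟩
      + .of _ 2 ⟨_, hc⟩, ?_⟩
    simp only [map_add, DirectSum.coeAddMonoidHom_of]
    abel

end Splitting

namespace SPT

variable {G G' G'' : Type} [Group G] [Group G'] [Group G''] (A : Type) [AddCommGroup A] {n : ℕ}

theorem cochainsMap_comp (f : G' →* G) (g : G'' →* G') :
    cochainsMap (f.comp g) A = cochainsMap f A ≫ cochainsMap g A := by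
  ext : 2; rfl

theorem cochainsMap_id : cochainsMap (MonoidHom.id G) A = 𝟙 _ := by
  ext : 2; rfl

theorem cohomologyMap_comp_apply (f : G' →* G) (g : G'' →* G')
    (x : groupCohomology (Rep.trivial ℤ G A) n) :
    cohomologyMap (f.comp g) A n x = cohomologyMap g A n (cohomologyMap f A n x) := by
  simp only [cohomologyMap, cochainsMap_comp, HomologicalComplex.homologyMap_comp]
  rfl

theorem cohomologyMap_id_apply (x : groupCohomology (Rep.trivial ℤ G A) n) :
    cohomologyMap (MonoidHom.id G) A n x = x := by
  simp only [cohomologyMap, cochainsMap_id, HomologicalComplex.homologyMap_id]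
  rfl

theorem cohomologyMap_one_apply (hn : 1 ≤ n) (x : groupCohomology (Rep.trivial ℤ G A) n) :
    cohomologyMap (1 : G' →* G) A n x = 0 := by
  obtain ⟨m, rfl⟩ := Nat.exists_eq_add_of_le' hn
  have : Subsingleton (groupCohomology (Rep.trivial ℤ PUnit A) (m + 1)) :=
    ModuleCat.isZero_iff_subsingleton.1 (isZero_groupCohomology_succ_of_subsingleton _ m)
  rw [← (1 : PUnit →* G).comp_one (M := G'), cohomologyMap_comp_apply,
    Subsingleton.elim (cohomologyMap 1 A _ x) 0, map_zero]

end SPT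

section Product

variable {G₁ G₂ : Type} [Group G₁] [Group G₂] {A : Type} [AddCommGroup A] {n : ℕ}

theorem res₁_infl₁ (y : groupCohomology (Rep.trivial ℤ G₁ A) n) :
    res₁ G₁ G₂ A n (infl₁ G₁ G₂ A n y) = y := by
  rw [res₁, infl₁, ← cohomologyMap_comp_apply, MonoidHom.fst_comp_inl,
    cohomologyMap_id_apply]

theorem res₂_infl₂ (y : groupCohomology (Rep.trivial ℤ G₂ A) n) :
    res₂ G₁ G₂ A n (infl₂ G₁ G₂ A n y) = y := by
  rw [res₂, infl₂, ← cohomologyMap_comp_apply, MonoidHom.snd_comp_inr,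
    cohomologyMap_id_apply]

theorem res₁_infl₂ (hn : 1 ≤ n) (y : groupCohomology (Rep.trivial ℤ G₂ A) n) :
    res₁ G₁ G₂ A n (infl₂ G₁ G₂ A n y) = 0 := by
  rw [res₁, infl₂, ← cohomologyMap_comp_apply, MonoidHom.snd_comp_inl,
    cohomologyMap_one_apply A hn]

theorem res₂_infl₁ (hn : 1 ≤ n) (y : groupCohomology (Rep.trivial ℤ G₁ A) n) :
    res₂ G₁ G₂ A n (infl₁ G₁ G₂ A n y) = 0 := by
  rw [res₂, infl₁, ← cohomologyMap_comp_apply, MonoidHom.fst_comp_inr,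
    cohomologyMap_one_apply A hn]

end Product

/-- For groups `G₁, G₂`, an abelian group `A` with the trivial action, and `n ≥ 1`:
`resᵢ ∘ inflᵢ = id`, `resᵢ ∘ inflⱼ = 0` for `i ≠ j`, each `inflᵢ` is injective, and
`H^n(G₁ × G₂; A)` is the internal direct sum of `range infl₁`, `range infl₂`, and
`ker res₁ ∩ ker res₂`. -/
theorem groupCohomology_prod_internal_direct_sum (G₁ G₂ : Type) [Group G₁] [Group G₂]
    (A : Type) [AddCommGroup A] (n : ℕ) (hn : 1 ≤ n) :
    (∀ y, res₁ G₁ G₂ A n (infl₁ G₁ G₂ A n y) = y) ∧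
    (∀ y, res₂ G₁ G₂ A n (infl₂ G₁ G₂ A n y) = y) ∧
    (∀ y, res₁ G₁ G₂ A n (infl₂ G₁ G₂ A n y) = 0) ∧
    (∀ y, res₂ G₁ G₂ A n (infl₁ G₁ G₂ A n y) = 0) ∧
    Function.Injective (infl₁ G₁ G₂ A n) ∧
    Function.Injective (infl₂ G₁ G₂ A n) ∧
    DirectSum.IsInternal
      ![(infl₁ G₁ G₂ A n).range, (infl₂ G₁ G₂ A n).range,
        (res₁ G₁ G₂ A n).ker ⊓ (res₂ G₁ G₂ A n).ker] := by
  exact ⟨res₁_infl₁, res₂_infl₂, res₁_infl₂ hn, res₂_infl₁ hn,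
    Function.LeftInverse.injective res₁_infl₁, Function.LeftInverse.injective res₂_infl₂,
    DirectSum.isInternal_range_range_ker_inf_ker res₁_infl₁ res₂_infl₂ (res₁_infl₂ hn)
      (res₂_infl₁ hn)⟩
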